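/- arXiv:1509.04381 — 2 statements merged into one kernel-verified Lean document; each statement's English description precedes it below -/
import Mathlib

section
/- Optimal recovery of a positive operator: Let X be a normed lattice, Z a real vector space, W ⊆ X a centrally symmetric class, I : X → Z an odd information map, and U ⊆ Z a nonempty centrally symmetric set. Suppose there exist a map L : Z → X and an element φ ∈ W with Iφ ∈ U such that for all x ∈ W and z ∈ Z, z ∈ Ix + U implies −φ ≤ x − Lz ≤ φ. Let Y be a normed lattice and A : X → Y a positive linear operator. Then Φ = A ∘ L is an optimal method of recovery of A on the class W based on information I with U-error, and E(A; W; I; U) = E(A; W; I; U; A ∘ L) = ‖Aφ‖_Y. -/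
open scoped ENNReal

/-!
The method `A ∘ L` has error at most `‖A φ‖`: for data `z` consistent with `x ∈ W` the hypothesis
gives `|x - L z| ≤ φ`, and a positive operator carries this to `|A x - A (L z)| ≤ A φ`.
No method does better: the zero information is consistent with both `φ` and `-φ`, whose images under
`A` are `2 ‖A φ‖` apart, so any value assigned to it misses one of them by at least `‖A φ‖`.
-/

theorem Monotone.norm_map_le_of_mem_Icc {X Y F : Type*} [AddGroup X] [Preorder X]
    [NormedAddCommGroup Y] [Lattice Y] [HasSolidNorm Y] [IsOrderedAddMonoid Y]
    [FunLike F X Y] [AddMonoidHomClass F X Y] {A : F} (hA : Monotone A) {x φ : X}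
    (hx : x ∈ Set.Icc (-φ) φ) : ‖A x‖ ≤ ‖A φ‖ := by
  have hle : A x ≤ A φ := hA hx.2
  have hneg_le : -A x ≤ A φ := neg_le.mp (map_neg A φ ▸ hA hx.1)
  exact HasSolidNorm.solid (abs_le_abs hle hneg_le)

/-- The error `E(A; W; I; U; Φ)` of the recovery method `Φ`. -/
noncomputable def recoveryError {X Z Y : Type*} [Add Z] [SeminormedAddCommGroup Y]
    (A : X → Y) (W : Set X) (I : X → Z) (U : Set Z) (Φ : Z → Y) : ℝ≥0∞ :=
  ⨆ x ∈ W, ⨆ z : Z, ⨆ (_ : ∃ u ∈ U, z = I x + u), ENNReal.ofReal ‖A x - Φ z‖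

section recoveryError

variable {X Z Y : Type*} [Add Z] [SeminormedAddCommGroup Y]
  {A : X → Y} {W : Set X} {I : X → Z} {U : Set Z} {Φ : Z → Y}

theorem recoveryError_le_ofReal {r : ℝ} (h : ∀ x ∈ W, ∀ u ∈ U, ‖A x - Φ (I x + u)‖ ≤ r) :
    recoveryError A W I U Φ ≤ ENNReal.ofReal r := by
  refine iSup₂_le fun x hx => iSup_le fun z => iSup_le ?_
  rintro ⟨u, hu, rfl⟩
  exact ENNReal.ofReal_le_ofReal (h x hx u hu)

theorem ofReal_norm_le_recoveryError {x : X} {u : Z} (hx : x ∈ W) (hu : u ∈ U) :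
    ENNReal.ofReal ‖A x - Φ (I x + u)‖ ≤ recoveryError A W I U Φ :=
  le_iSup₂_of_le x hx <| le_iSup_of_le (I x + u) <| le_iSup_of_le ⟨u, hu, rfl⟩ le_rfl

theorem ofReal_norm_sub_le_two_mul_recoveryError {x x' : X} {u u' : Z} (hx : x ∈ W) (hx' : x' ∈ W)
    (hu : u ∈ U) (hu' : u' ∈ U) (h : I x + u = I x' + u') :
    ENNReal.ofReal ‖A x - A x'‖ ≤ 2 * recoveryError A W I U Φ := by
  set z := I x + u
  calc ENNReal.ofReal ‖A x - A x'‖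
      ≤ ENNReal.ofReal (‖A x - Φ z‖ + ‖A x' - Φ z‖) :=
        ENNReal.ofReal_le_ofReal <| by
          simpa only [dist_eq_norm] using dist_triangle_right (A x) (A x') (Φ z)
    _ ≤ ENNReal.ofReal ‖A x - Φ z‖ + ENNReal.ofReal ‖A x' - Φ z‖ := ENNReal.ofReal_add_le
    _ ≤ recoveryError A W I U Φ + recoveryError A W I U Φ := by
        gcongr
        · exact ofReal_norm_le_recoveryError hx hu
        · rw [h]; exact ofReal_norm_le_recoveryError hx' hu'
    _ = 2 * recoveryError A W I U Φ := (two_mul _).symm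

end recoveryError

theorem ofReal_norm_le_recoveryError_of_odd {X Z Y : Type*} [Neg X] [AddGroup Z]
    [SeminormedAddCommGroup Y] [NormedSpace ℝ Y] {A : X → Y} {W : Set X} {I : X → Z} {U : Set Z}
    {Φ : Z → Y} {φ : X} (hA : A (-φ) = -A φ) (hI : I (-φ) = -I φ)
    (hφ : φ ∈ W) (hφ' : -φ ∈ W) (hIφ : I φ ∈ U) (hIφ' : -I φ ∈ U) :
    ENNReal.ofReal ‖A φ‖ ≤ recoveryError A W I U Φ := by
  have hsame : I φ + -I φ = I (-φ) + I φ := by rw [hI, add_neg_cancel, neg_add_cancel]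
  have hnorm : ‖A φ - A (-φ)‖ = 2 * ‖A φ‖ := by
    rw [hA, sub_neg_eq_add, ← two_smul ℝ, norm_smul, Real.norm_two]
  have h := ofReal_norm_sub_le_two_mul_recoveryError (A := A) (Φ := Φ) hφ hφ' hIφ' hIφ hsame
  rwa [hnorm, ENNReal.ofReal_mul zero_le_two, ENNReal.ofReal_ofNat,
    ENNReal.mul_le_mul_iff_right two_ne_zero ENNReal.ofNat_ne_top] at h

theorem optimal_recovery_positive_operator_general
    {X Z Y : Type*} [NormedAddCommGroup X] [Lattice X]
      [IsOrderedAddMonoid X] [NormedSpace ℝ X]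
    [AddCommGroup Z]
    [NormedAddCommGroup Y] [Lattice Y] [HasSolidNorm Y]
      [IsOrderedAddMonoid Y] [NormedSpace ℝ Y]
    (W : Set X) (hW_symm : ∀ x ∈ W, -x ∈ W)
    (I : X → Z) (hI_odd : ∀ x : X, I (-x) = -(I x))
    (U : Set Z) (hU_symm : ∀ u ∈ U, -u ∈ U)
    (L : Z → X) (φ : X) (hφW : φ ∈ W) (hφU : I φ ∈ U)
    (hL : ∀ x ∈ W, ∀ z : Z, (∃ u ∈ U, z = I x + u) → -φ ≤ x - L z ∧ x - L z ≤ φ)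
    (A : X →ₗ[ℝ] Y) (hA_pos : ∀ x : X, 0 ≤ x → 0 ≤ A x) :
    let Err : (Z → Y) → ℝ≥0∞ := fun Φ =>
      ⨆ x ∈ W, ⨆ z : Z, ⨆ (_ : ∃ u ∈ U, z = I x + u), ENNReal.ofReal ‖A x - Φ z‖
    (⨅ Φ : Z → Y, Err Φ) = Err (fun z => A (L z)) ∧
      Err (fun z => A (L z)) = ENNReal.ofReal ‖A φ‖ := by
  intro Err
  have lower (Φ : Z → Y) : ENNReal.ofReal ‖A φ‖ ≤ Err Φ :=
    ofReal_norm_le_recoveryError_of_odd (map_neg A φ) (hI_odd φ) hφW (hW_symm φ hφW) hφU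
      (hU_symm _ hφU)
  have hA_mono : Monotone A := (monotone_iff_map_nonneg A).2 hA_pos
  have upper : Err (fun z => A (L z)) ≤ ENNReal.ofReal ‖A φ‖ :=
    recoveryError_le_ofReal fun x hx u hu => by
      rw [← map_sub]
      exact hA_mono.norm_map_le_of_mem_Icc (hL x hx _ ⟨u, hu, rfl⟩)
  have optimal : Err (fun z => A (L z)) = ENNReal.ofReal ‖A φ‖ := le_antisymm upper (lower _)
  exact ⟨le_antisymm (iInf_le _ _) (le_iInf fun Φ => optimal ▸ lower Φ), optimal⟩

/-- Optimal recovery of a positive linear operator between normed lattices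
(Proposition 4 of the paper). -/
theorem optimal_recovery_positive_operator
    {X Z Y : Type*} [NormedAddCommGroup X] [Lattice X] [HasSolidNorm X]
      [IsOrderedAddMonoid X] [NormedSpace ℝ X]
    [AddCommGroup Z] [Module ℝ Z]
    [NormedAddCommGroup Y] [Lattice Y] [HasSolidNorm Y]
      [IsOrderedAddMonoid Y] [NormedSpace ℝ Y]
    (W : Set X) (hW_symm : ∀ x ∈ W, -x ∈ W)
    (I : X → Z) (hI_odd : ∀ x : X, I (-x) = -(I x))
    (U : Set Z) (hU_ne : U.Nonempty) (hU_symm : ∀ u ∈ U, -u ∈ U)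
    (L : Z → X) (φ : X) (hφW : φ ∈ W) (hφU : I φ ∈ U)
    (hL : ∀ x ∈ W, ∀ z : Z, (∃ u ∈ U, z = I x + u) → -φ ≤ x - L z ∧ x - L z ≤ φ)
    (A : X →ₗ[ℝ] Y) (hA_pos : ∀ x : X, 0 ≤ x → 0 ≤ A x) :
    let Err : (Z → Y) → ℝ≥0∞ := fun Φ =>
      ⨆ x ∈ W, ⨆ z : Z, ⨆ (_ : ∃ u ∈ U, z = I x + u), ENNReal.ofReal ‖A x - Φ z‖
    (⨅ Φ : Z → Y, Err Φ) = Err (fun z => A (L z)) ∧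
      Err (fun z => A (L z)) = ENNReal.ofReal ‖A φ‖ :=
  optimal_recovery_positive_operator_general W hW_symm I hI_odd U hU_symm L φ hφW hφU hL A hA_pos
end

section
/- Constant-mass kernel case: Under the setting of optimal recovery of the positive integral operator A x(y) = ∫_{M'} K(y,t) x(t) dμ(t) into L¹(N,ν) on the class H^ω(M') based on information I_Q with U_e-error, if there is a constant C_K such that ∫_N K(y,t) dν(y) = C_K for μ-almost every t ∈ M', then E(A; H^ω(M'); I_Q; U_e) = C_K ∫_{M'} τ_{ω,Q,e}(t) dμ(t). -/
/-!
The function `τ := tauOR ω q e` is itself in the class `H^ω`, is nonnegative and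
satisfies `τ(q_j) ≤ e_j`, so `±τ` are both consistent with the zero measurement; every method
therefore errs by at least `‖Aτ‖₁` on one of them. Conversely, any admissible `x` with
measurement `z` is squeezed between `-τ_{e-z}` and `τ_{z+e}`, and the midpoint of these
envelopes is within `τ` of `x`; since `K ≥ 0`, the method `z ↦ A((τ_{z+e} - τ_{e-z})/2)` errs
by at most `‖Aτ‖₁`. Constant mass of the kernel and Fubini give `‖Aτ‖₁ = C_K ∫ τ dμ`.
-/

open MeasureTheory
open scoped ENNReal

/-- The function `τ_{ω,Q,e}(t) = min_j (e_j + ω(ρ(t,q_j)))`. -/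
noncomputable def tauOR {M : Type*} [MetricSpace M] (ω : ℝ → ℝ) {n : ℕ}
    (q : Fin n → M) (e : Fin n → ℝ) (t : M) : ℝ :=
  ⨅ j, (e j + ω (dist t (q j)))

section Modulus

variable {M : Type*} [PseudoMetricSpace M] {ω : ℝ → ℝ}

def HasModulus (ω : ℝ → ℝ) (f : M → ℝ) : Prop :=
  ∀ t t' : M, |f t - f t'| ≤ ω (dist t t')

theorem HasModulus.neg {f : M → ℝ} (hf : HasModulus ω f) : HasModulus ω (-f) := fun t t' => by
  simpa only [Pi.neg_apply, neg_sub_neg, abs_sub_comm] using hf t t'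

theorem HasModulus.exists_abs_le [BoundedSpace M] (hω_mono : MonotoneOn ω (Set.Ici 0))
    {f : M → ℝ} (hf : HasModulus ω f) : ∃ B, ∀ t, |f t| ≤ B := by
  rcases isEmpty_or_nonempty M with _ | ⟨⟨t₀⟩⟩
  · exact ⟨0, fun t => isEmptyElim t⟩
  refine ⟨|f t₀| + ω (Metric.diam (Set.univ : Set M)), fun t => ?_⟩
  have hdist : dist t t₀ ≤ Metric.diam (Set.univ : Set M) :=
    Metric.dist_le_diam_of_mem BoundedSpace.bounded_univ trivial trivial
  have := hω_mono dist_nonneg (dist_nonneg.trans hdist) hdist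
  have := abs_sub_abs_le_abs_sub (f t) (f t₀)
  linarith [hf t t₀]

end Modulus

section Tau

variable {M : Type*} [MetricSpace M] {ω : ℝ → ℝ} {n : ℕ} (q : Fin n → M)

theorem tauOR_le (c : Fin n → ℝ) (t : M) (j : Fin n) :
    tauOR ω q c t ≤ c j + ω (dist t (q j)) :=
  ciInf_le (Set.finite_range _).bddBelow j

theorem le_tauOR [NeZero n] {c : Fin n → ℝ} {t : M} {a : ℝ}
    (h : ∀ j, a ≤ c j + ω (dist t (q j))) : a ≤ tauOR ω q c t :=
  le_ciInf h

theorem tauOR_nonneg (hω0 : ω 0 = 0) (hω_mono : MonotoneOn ω (Set.Ici 0)) {c : Fin n → ℝ}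
    (hc : ∀ j, 0 ≤ c j) (t : M) : 0 ≤ tauOR ω q c t :=
  Real.iInf_nonneg fun j => add_nonneg (hc j) <|
    hω0 ▸ hω_mono Set.self_mem_Ici dist_nonneg dist_nonneg

theorem abs_tauOR_apply_le (hω0 : ω 0 = 0) (hω_mono : MonotoneOn ω (Set.Ici 0)) {c : Fin n → ℝ}
    (hc : ∀ j, 0 ≤ c j) (j : Fin n) : |tauOR ω q c (q j)| ≤ c j := by
  rw [abs_of_nonneg (tauOR_nonneg q hω0 hω_mono hc _)]
  simpa [hω0] using tauOR_le (ω := ω) q c (q j) j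

theorem hasModulus_tauOR [NeZero n] (hω_mono : MonotoneOn ω (Set.Ici 0))
    (hω_subadd : ∀ s t : ℝ, 0 ≤ s → 0 ≤ t → ω (s + t) ≤ ω s + ω t) (c : Fin n → ℝ) :
    HasModulus ω (tauOR ω q c) := by
  have key : ∀ t t', tauOR ω q c t - tauOR ω q c t' ≤ ω (dist t t') := fun t t' => by
    suffices tauOR ω q c t - ω (dist t t') ≤ tauOR ω q c t' by linarith
    refine le_tauOR q fun j => ?_
    have htri := hω_mono dist_nonneg (add_nonneg dist_nonneg dist_nonneg) (dist_triangle t t' (q j))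
    linarith [tauOR_le (ω := ω) q c t j,
      hω_subadd (dist t t') (dist t' (q j)) dist_nonneg dist_nonneg]
  exact fun t t' => abs_sub_le_iff.2 ⟨key t t', dist_comm t t' ▸ key t' t⟩

theorem measurable_tauOR [MeasurableSpace M] [BorelSpace M] (hω_mono : MonotoneOn ω (Set.Ici 0))
    (c : Fin n → ℝ) : Measurable (tauOR ω q c) := by
  have hmono : Monotone fun s => ω (max 0 s) := fun s s' h =>
    hω_mono (le_max_left 0 s) (le_max_left 0 s') (max_le_max_left 0 h)
  have hmeas : Measurable fun s : ℝ => ω (max 0 s) := hmono.measurable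
  refine Measurable.iInf fun j => measurable_const.add ?_
  have := hmeas.comp (continuous_id.dist (continuous_const (y := q j))).measurable
  simpa only [Function.comp_def, id, max_eq_right dist_nonneg] using this

/-- The midpoint of the upper envelope `τ_{z+e}` and the lower envelope `-τ_{e-z}` of the
functions of the class consistent with the measurement `z`. -/
noncomputable def centralRecovery (ω : ℝ → ℝ) (q : Fin n → M) (e z : Fin n → ℝ) (t : M) : ℝ :=
  (tauOR ω q (z + e) t - tauOR ω q (e - z) t) / 2

theorem hasModulus_centralRecovery [NeZero n] (hω_mono : MonotoneOn ω (Set.Ici 0))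
    (hω_subadd : ∀ s t : ℝ, 0 ≤ s → 0 ≤ t → ω (s + t) ≤ ω s + ω t) (e z : Fin n → ℝ) :
    HasModulus ω (centralRecovery ω q e z) := fun t t' => by
  have h₁ := hasModulus_tauOR q hω_mono hω_subadd (z + e) t t'
  have h₂ := hasModulus_tauOR q hω_mono hω_subadd (e - z) t t'
  rw [abs_le] at h₁ h₂ ⊢
  constructor <;> (unfold centralRecovery; linarith [h₁.1, h₁.2, h₂.1, h₂.2])

theorem abs_sub_centralRecovery_le [NeZero n] {x : M → ℝ} (hx : HasModulus ω x)
    {e z : Fin n → ℝ} (hz : ∀ j, |z j - x (q j)| ≤ e j) (t : M) :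
    |x t - centralRecovery ω q e z t| ≤ tauOR ω q e t := by
  have upper : x t ≤ tauOR ω q (z + e) t := le_tauOR q fun j => by
    linarith [(abs_le.1 (hx t (q j))).2, (abs_le.1 (hz j)).1, Pi.add_apply z e j]
  have lower : -x t ≤ tauOR ω q (e - z) t := le_tauOR q fun j => by
    linarith [(abs_le.1 (hx t (q j))).1, (abs_le.1 (hz j)).2, Pi.sub_apply e z j]
  have mid : (tauOR ω q (z + e) t + tauOR ω q (e - z) t) / 2 ≤ tauOR ω q e t :=
    le_tauOR q fun j => by
      linarith [tauOR_le (ω := ω) q (z + e) t j, tauOR_le (ω := ω) q (e - z) t j,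
        Pi.add_apply z e j, Pi.sub_apply e z j]
  rw [abs_le]
  constructor <;> (unfold centralRecovery; linarith)

end Tau

theorem eLpNorm_le_of_eLpNorm_sub_le_of_eLpNorm_neg_sub_le {α E : Type*} [MeasurableSpace α]
    {μ : Measure α} [NormedAddCommGroup E] [NormedSpace ℝ E] {p : ℝ≥0∞} (hp : 1 ≤ p)
    {f h : α → E} (hf : AEStronglyMeasurable f μ) (hh : AEStronglyMeasurable h μ) {c : ℝ≥0∞}
    (h₁ : eLpNorm (f - h) p μ ≤ c) (h₂ : eLpNorm (-f - h) p μ ≤ c) : eLpNorm f p μ ≤ c := by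
  have htwo : (2 : ℝ) • f = (f - h) - (-f - h) := by
    rw [two_smul]; abel
  have : 2 * eLpNorm f p μ ≤ 2 * c := calc
    2 * eLpNorm f p μ = eLpNorm ((2 : ℝ) • f) p μ := by
      rw [eLpNorm_const_smul, Real.enorm_eq_ofReal zero_le_two, ENNReal.ofReal_ofNat]
    _ ≤ eLpNorm (f - h) p μ + eLpNorm (-f - h) p μ :=
      htwo ▸ eLpNorm_sub_le (hf.sub hh) (hf.neg.sub hh) hp
    _ ≤ 2 * c := by rw [two_mul]; exact add_le_add h₁ h₂
  exact (ENNReal.mul_le_mul_iff_right two_ne_zero ENNReal.ofNat_ne_top).1 this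

section KernelOperator

variable {M N : Type*} [MeasurableSpace M] {μ : Measure M} {K : N → M → ℝ}

noncomputable def kernelOp (K : N → M → ℝ) (μ : Measure M) (x : M → ℝ) (y : N) : ℝ :=
  ∫ t, K y t * x t ∂μ

theorem kernelOp_neg (x : M → ℝ) : kernelOp K μ (-x) = -kernelOp K μ x := by
  ext y
  simp only [kernelOp, Pi.neg_apply, mul_neg, integral_neg]

variable [MeasurableSpace N] {ν : Measure N}

theorem integrable_kernel_mul_of_hasModulus [PseudoMetricSpace M] [BoundedSpace M]
    (hK_int : Integrable (fun p : N × M => K p.1 p.2) (ν.prod μ)) {ω : ℝ → ℝ}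
    (hω_mono : MonotoneOn ω (Set.Ici 0)) {x : M → ℝ} (hx : Measurable x) (hxω : HasModulus ω x) :
    Integrable (fun p : N × M => K p.1 p.2 * x p.2) (ν.prod μ) :=
  have ⟨_, hB⟩ := hxω.exists_abs_le hω_mono
  (hK_int.bdd_mul (hx.comp measurable_snd).aestronglyMeasurable
    (Filter.Eventually.of_forall fun p => hB p.2)).congr
    (Filter.Eventually.of_forall fun _ => mul_comm _ _)

theorem memLp_kernelOp [SFinite μ] {x : M → ℝ}
    (hx : Integrable (fun p : N × M => K p.1 p.2 * x p.2) (ν.prod μ)) :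
    MemLp (kernelOp K μ x) 1 ν :=
  memLp_one_iff_integrable.2 hx.integral_prod_left

theorem eLpNorm_kernelOp_sub_le [SFinite μ] [SFinite ν] (hK_nonneg : ∀ y t, 0 ≤ K y t)
    {x x' g : M → ℝ} (hx : Integrable (fun p : N × M => K p.1 p.2 * x p.2) (ν.prod μ))
    (hx' : Integrable (fun p : N × M => K p.1 p.2 * x' p.2) (ν.prod μ))
    (hg : Integrable (fun p : N × M => K p.1 p.2 * g p.2) (ν.prod μ))
    (hxx' : ∀ t, |x t - x' t| ≤ g t) :
    eLpNorm (kernelOp K μ x - kernelOp K μ x') 1 ν ≤ eLpNorm (kernelOp K μ g) 1 ν := by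
  refine eLpNorm_mono_ae ?_
  filter_upwards [hx.prod_right_ae, hx'.prod_right_ae, hg.prod_right_ae] with y h₁ h₂ h₃
  have hdiff : kernelOp K μ x y - kernelOp K μ x' y = ∫ t, K y t * (x t - x' t) ∂μ := by
    simp only [kernelOp, mul_sub, integral_sub h₁ h₂]
  calc ‖(kernelOp K μ x - kernelOp K μ x') y‖ = |∫ t, K y t * (x t - x' t) ∂μ| := by
        rw [Pi.sub_apply, hdiff, Real.norm_eq_abs]
    _ ≤ ∫ t, |K y t * (x t - x' t)| ∂μ := abs_integral_le_integral_abs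
    _ ≤ ∫ t, K y t * g t ∂μ := by
        refine integral_mono ((h₁.sub h₂).congr ?_).abs h₃ fun t => ?_
        · exact Filter.Eventually.of_forall fun t => (mul_sub _ _ _).symm
        · rw [abs_mul, abs_of_nonneg (hK_nonneg y t)]
          exact mul_le_mul_of_nonneg_left (hxx' t) (hK_nonneg y t)
    _ ≤ ‖kernelOp K μ g y‖ := le_abs_self _

theorem eLpNorm_kernelOp_eq_of_ae_integral_kernel_eq [SFinite μ] [SFinite ν]
    (hK_nonneg : ∀ y t, 0 ≤ K y t) {g : M → ℝ} (hg_nonneg : ∀ t, 0 ≤ g t)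
    (hg : Integrable (fun p : N × M => K p.1 p.2 * g p.2) (ν.prod μ))
    {CK : ℝ} (hCK : ∀ᵐ t ∂μ, (∫ y, K y t ∂ν) = CK) :
    eLpNorm (kernelOp K μ g) 1 ν = ENNReal.ofReal (CK * ∫ t, g t ∂μ) := by
  have hAg_nonneg : ∀ y, 0 ≤ kernelOp K μ g y := fun y =>
    integral_nonneg fun t => mul_nonneg (hK_nonneg y t) (hg_nonneg t)
  have hfubini : ∫ y, kernelOp K μ g y ∂ν = CK * ∫ t, g t ∂μ := calc
    ∫ y, kernelOp K μ g y ∂ν = ∫ t, (∫ y, K y t ∂ν) * g t ∂μ := by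
      simp only [kernelOp, ← integral_mul_const]
      exact integral_integral_swap (f := fun y t => K y t * g t) hg
    _ = CK * ∫ t, g t ∂μ := by
      rw [← integral_const_mul]
      exact integral_congr_ae (by filter_upwards [hCK] with t ht using by rw [ht])
  have hAg : Integrable (kernelOp K μ g) ν := hg.integral_prod_left
  rw [eLpNorm_one_eq_lintegral_enorm, ← hfubini,
    ofReal_integral_eq_lintegral_ofReal hAg (Filter.Eventually.of_forall hAg_nonneg)]
  exact lintegral_congr fun y => Real.enorm_eq_ofReal (hAg_nonneg y)

end KernelOperator

theorem optimal_recovery_integral_operator_constant_mass_general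
    {M : Type*} [MetricSpace M] [CompactSpace M] [MeasurableSpace M] [BorelSpace M]
    (μ : Measure M) [IsFiniteMeasure μ]
    {N : Type*} [MeasurableSpace N] (ν : Measure N) [SigmaFinite ν]
    (K : N → M → ℝ) (hK_nonneg : ∀ y t, 0 ≤ K y t)
    (hK_int : Integrable (fun p : N × M => K p.1 p.2) (ν.prod μ))
    (ω : ℝ → ℝ) (hω0 : ω 0 = 0)
    (hω_mono : MonotoneOn ω (Set.Ici 0))
    (hω_subadd : ∀ s t : ℝ, 0 ≤ s → 0 ≤ t → ω (s + t) ≤ ω s + ω t)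
    {n : ℕ} (hn : 0 < n) (q : Fin n → M) (e : Fin n → ℝ) (he : ∀ j, 0 ≤ e j)
    (CK : ℝ) (hCK : ∀ᵐ t ∂μ, (∫ y, K y t ∂ν) = CK) :
    let A : (M → ℝ) → N → ℝ := fun x y => ∫ t, K y t * x t ∂μ
    let W : Set (M → ℝ) := {x | Measurable x ∧ ∀ t t' : M, |x t - x t'| ≤ ω (dist t t')}
    let Err : ((Fin n → ℝ) → N → ℝ) → ℝ≥0∞ := fun Φ =>
      ⨆ x ∈ W, ⨆ z : Fin n → ℝ, ⨆ (_ : ∀ j, |z j - x (q j)| ≤ e j),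
        eLpNorm (fun y => A x y - Φ z y) 1 ν
    (⨅ Φ : {Φ : (Fin n → ℝ) → N → ℝ // ∀ z, MemLp (Φ z) 1 ν}, Err Φ.1) =
      ENNReal.ofReal (CK * ∫ t, tauOR ω q e t ∂μ) := by
  intro A W Err
  have : NeZero n := ⟨hn.ne'⟩
  have integrable_of_mem {x : M → ℝ} (hx : x ∈ W) :
      Integrable (fun p : N × M => K p.1 p.2 * x p.2) (ν.prod μ) :=
    integrable_kernel_mul_of_hasModulus hK_int hω_mono hx.1 hx.2
  set τ := tauOR ω q e
  have hτ : τ ∈ W := ⟨measurable_tauOR q hω_mono e, hasModulus_tauOR q hω_mono hω_subadd e⟩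
  have hτ_q : ∀ j, |0 - τ (q j)| ≤ e j := fun j => by
    simpa using abs_tauOR_apply_le q hω0 hω_mono he j
  rw [← eLpNorm_kernelOp_eq_of_ae_integral_kernel_eq hK_nonneg (tauOR_nonneg q hω0 hω_mono he)
    (integrable_of_mem hτ) hCK]
  refine le_antisymm ?_ (le_iInf fun Φ => ?_)
  · have hcr (z : Fin n → ℝ) : centralRecovery ω q e z ∈ W :=
      ⟨((measurable_tauOR q hω_mono _).sub (measurable_tauOR q hω_mono _)).div_const 2,
        hasModulus_centralRecovery q hω_mono hω_subadd e z⟩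
    refine iInf_le_of_le ⟨fun z => kernelOp K μ (centralRecovery ω q e z),
      fun z => memLp_kernelOp (integrable_of_mem (hcr z))⟩ ?_
    refine iSup₂_le fun x hx => iSup₂_le fun z hz => ?_
    exact eLpNorm_kernelOp_sub_le hK_nonneg (integrable_of_mem hx) (integrable_of_mem (hcr z))
      (integrable_of_mem hτ) (abs_sub_centralRecovery_le q hx.2 hz)
  · have hErr {x : M → ℝ} (hx : x ∈ W) (hz : ∀ j, |0 - x (q j)| ≤ e j) :
        eLpNorm (kernelOp K μ x - Φ.1 0) 1 ν ≤ Err Φ.1 :=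
      le_iSup₂_of_le x hx (le_iSup₂_of_le (0 : Fin n → ℝ) hz le_rfl)
    refine eLpNorm_le_of_eLpNorm_sub_le_of_eLpNorm_neg_sub_le le_rfl
      (memLp_kernelOp (integrable_of_mem hτ)).1 (Φ.2 0).1 (hErr hτ hτ_q) ?_
    rw [← kernelOp_neg]
    exact hErr ⟨hτ.1.neg, HasModulus.neg hτ.2⟩ fun j => by simpa using hτ_q j

/-- Constant-mass kernel case: if `∫_N K(y,t) dν(y) = C_K` for `μ`-a.e. `t`, then the
error of optimal recovery of the integral operator equals `C_K ∫_{M'} τ_{ω,Q,e} dμ`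
(Corollary 1 of the paper). -/
theorem optimal_recovery_integral_operator_constant_mass
    {M : Type*} [MetricSpace M] [CompactSpace M] [MeasurableSpace M] [BorelSpace M]
    (μ : Measure M) [IsFiniteMeasure μ]
    {N : Type*} [MeasurableSpace N] (ν : Measure N) [SigmaFinite ν]
    (K : N → M → ℝ) (hK_nonneg : ∀ y t, 0 ≤ K y t)
    (hK_int : Integrable (fun p : N × M => K p.1 p.2) (ν.prod μ))
    (ω : ℝ → ℝ) (hω0 : ω 0 = 0)
    (hω_cont : ContinuousOn ω (Set.Ici 0))
    (hω_mono : MonotoneOn ω (Set.Ici 0))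
    (hω_subadd : ∀ s t : ℝ, 0 ≤ s → 0 ≤ t → ω (s + t) ≤ ω s + ω t)
    (hω_nonneg : ∀ s : ℝ, 0 ≤ s → 0 ≤ ω s)
    {n : ℕ} (hn : 0 < n) (q : Fin n → M) (e : Fin n → ℝ) (he : ∀ j, 0 ≤ e j)
    (CK : ℝ) (hCK : ∀ᵐ t ∂μ, (∫ y, K y t ∂ν) = CK) :
    let A : (M → ℝ) → N → ℝ := fun x y => ∫ t, K y t * x t ∂μ
    let W : Set (M → ℝ) := {x | Measurable x ∧ ∀ t t' : M, |x t - x t'| ≤ ω (dist t t')}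
    let Err : ((Fin n → ℝ) → N → ℝ) → ℝ≥0∞ := fun Φ =>
      ⨆ x ∈ W, ⨆ z : Fin n → ℝ, ⨆ (_ : ∀ j, |z j - x (q j)| ≤ e j),
        eLpNorm (fun y => A x y - Φ z y) 1 ν
    (⨅ Φ : {Φ : (Fin n → ℝ) → N → ℝ // ∀ z, MemLp (Φ z) 1 ν}, Err Φ.1) =
      ENNReal.ofReal (CK * ∫ t, tauOR ω q e t ∂μ) :=
  optimal_recovery_integral_operator_constant_mass_general μ ν K hK_nonneg hK_int ω hω0 hω_mono
    hω_subadd hn q e he CK hCK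
end
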